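/- Let f = a x^r + b x^s ∈ ℕ[x^{±1}] with a ≥ b ≥ 1 positive integers, r ≠ s, and a + b > 3. Then f can be written as the sum of two irreducible elements of ℕ[x^{±1}]. Specifically, if b = 1 then f = ((a−2)x^r + x^s) + 2x^r, and if b > 1 then f = ((a−1)x^r + x^s) + (x^r + (b−1)x^s), with all four summands irreducible. -/

import Mathlib

/-- The semiring of Laurent polynomials with nonnegative integer coefficients, ℕ[x^{±1}]. -/
abbrev NL : Type := AddMonoidAlgebra ℕ ℤ

/-- The monomial `c • x^k` in ℕ[x^{±1}]. -/
noncomputable def mono (k : ℤ) (c : ℕ) : NL := AddMonoidAlgebra.single k c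

/-- Evaluation at 1, i.e. the sum of the coefficients. -/
def evalOne (f : NL) : ℕ := f.coeff.sum fun _ c => c

/-- A monomial is `c x^k` with `c ≥ 1`. -/
def IsMonomial (f : NL) : Prop := ∃ (c : ℕ) (k : ℤ), 0 < c ∧ f = mono k c

/-- A nonzero `f` is monolithic if any factorization has a monomial factor. -/
def Monolithic (f : NL) : Prop :=
  f ≠ 0 ∧ ∀ g h : NL, f = g * h → IsMonomial g ∨ IsMonomial h

/-- `f` is hyper-monolithic: it has ≥ 2 terms, written with positive coefficients and
strictly decreasing exponents `k 0 > ⋯ > k n`, and either the first gap is strictly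
smaller than every later gap, or the last gap is strictly smaller than every earlier gap. -/
def HyperMonolithic (f : NL) : Prop :=
  ∃ (n : ℕ) (k : ℕ → ℤ) (c : ℕ → ℕ),
    1 ≤ n ∧ (∀ i j, i < j → j ≤ n → k j < k i) ∧ (∀ i, i ≤ n → 0 < c i) ∧
    f = ∑ i ∈ Finset.range (n + 1), mono (k i) (c i) ∧
    ((∀ i, 1 ≤ i → i + 1 ≤ n → k 0 - k 1 < k i - k (i + 1)) ∨
     (∀ j, j + 2 ≤ n → k (n - 1) - k n < k j - k (j + 1)))

/-!
The coefficient sum `evalOne` is a ring homomorphism `ℕ[x^{±1}] → ℕ`, and an element with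
coefficient sum `1` is a monomial `x^k`; so the units are exactly the elements of coefficient sum
`1`, and an element whose coefficient sum is prime, such as `2x^r`, is irreducible.

Nonnegative coefficients cannot cancel, so the support of a product is the sumset of the supports,
and by Cauchy–Davenport in `ℤ` a two-term element can only factor as a monomial `d x^k` times a
binomial. Then `d` divides both coefficients, so a binomial with coprime coefficients is
irreducible. Every summand in the two decompositions is of one of these two kinds.
-/

open AddMonoidAlgebra

noncomputable def evalOneHom : NL →ₐ[ℕ] ℕ := lift ℕ ℕ ℤ 1

lemma evalOneHom_apply (f : NL) : evalOneHom f = evalOne f := by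
  simp [evalOneHom, lift_apply, evalOne]

lemma evalOne_mul (f g : NL) : evalOne (f * g) = evalOne f * evalOne g := by
  simp only [← evalOneHom_apply, map_mul]

lemma evalOne_add (f g : NL) : evalOne (f + g) = evalOne f + evalOne g := by
  simp only [← evalOneHom_apply, map_add]

@[simp]
lemma evalOne_mono (k : ℤ) (c : ℕ) : evalOne (mono k c) = c := by
  rw [← evalOneHom_apply, evalOneHom, mono, lift_single, MonoidHom.one_apply, smul_eq_mul,
    mul_one]

lemma card_support_le_evalOne (f : NL) : f.coeff.support.card ≤ evalOne f := by
  rw [Finset.card_eq_sum_ones]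
  exact Finset.sum_le_sum fun k hk => Nat.one_le_iff_ne_zero.mpr (Finsupp.mem_support_iff.mp hk)

lemma evalOne_eq_zero_iff {f : NL} : evalOne f = 0 ↔ f = 0 := by
  refine ⟨fun h => ?_, fun h => by simp [h, evalOne]⟩
  have := card_support_le_evalOne f
  rw [← coeff_eq_zero, ← Finsupp.support_eq_empty, ← Finset.card_eq_zero]
  omega

lemma exists_eq_mono_of_evalOne_eq_one {f : NL} (hf : evalOne f = 1) : ∃ k, f = mono k 1 := by
  obtain ⟨k, c, hk⟩ := Finsupp.card_support_le_one'.mp (hf ▸ card_support_le_evalOne f)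
  have hc : c = 1 := by rw [← hf, evalOne, hk, Finsupp.sum_single_index rfl]
  exact ⟨k, by rw [← coeff_inj, hk, hc]; rfl⟩

lemma isUnit_mono_one (k : ℤ) : IsUnit (mono k 1) :=
  .of_mul_eq_one (mono (-k) 1) <| by
    rw [mono, mono, single_mul_single, add_neg_cancel, mul_one, one_def]

lemma isUnit_iff_evalOne_eq_one {f : NL} : IsUnit f ↔ evalOne f = 1 := by
  refine ⟨fun hf => ?_, fun hf => ?_⟩
  · rw [← evalOneHom_apply]; exact Nat.isUnit_iff.mp (hf.map evalOneHom)
  · obtain ⟨k, rfl⟩ := exists_eq_mono_of_evalOne_eq_one hf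
    exact isUnit_mono_one k

lemma irreducible_of_prime_evalOne {f : NL} (hf : (evalOne f).Prime) : Irreducible f := by
  refine ⟨fun hu => hf.one_lt.ne' (isUnit_iff_evalOne_eq_one.mp hu), fun g h hgh => ?_⟩
  rw [hgh, evalOne_mul, Nat.prime_mul_iff] at hf
  simp only [isUnit_iff_evalOne_eq_one]
  tauto

open scoped Pointwise in
lemma support_coeff_mul_eq_add {R G : Type*} [Semiring R] [PartialOrder R]
    [CanonicallyOrderedAdd R] [NoZeroDivisors R] [AddMonoid G] [DecidableEq G] (x y : R[G]) :
    (x * y).coeff.support = x.coeff.support + y.coeff.support := by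
  ext m
  simp only [Finsupp.mem_support_iff, coeff_mul, Finset.mem_add, Finsupp.sum, ne_eq,
    Finset.sum_eq_zero_iff, not_forall, ite_eq_right_iff, mul_eq_zero, not_or]
  grind

lemma card_support_coeff_mul {g h : NL} (hg : g ≠ 0) (hh : h ≠ 0) :
    g.coeff.support.card + h.coeff.support.card ≤ (g * h).coeff.support.card + 1 := by
  have := cauchy_davenport_add_of_linearOrder_isCancelAdd
    (Finsupp.support_nonempty_iff.mpr (coeff_eq_zero.not.mpr hg))
    (Finsupp.support_nonempty_iff.mpr (coeff_eq_zero.not.mpr hh))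
  rw [← support_coeff_mul_eq_add] at this
  omega

section Binomial

variable {r s : ℤ} {c d : ℕ}

lemma coeff_binomial_left (hrs : r ≠ s) : (mono r c + mono s d).coeff r = c := by
  rw [mono, mono, coeff_add, coeff_single, coeff_single, Finsupp.add_apply,
    Finsupp.single_eq_same, Finsupp.single_eq_of_ne hrs, add_zero]

lemma coeff_binomial_right (hrs : r ≠ s) : (mono r c + mono s d).coeff s = d := by
  rw [mono, mono, coeff_add, coeff_single, coeff_single, Finsupp.add_apply,
    Finsupp.single_eq_same, Finsupp.single_eq_of_ne hrs.symm, zero_add]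

lemma card_support_coeff_binomial (hrs : r ≠ s) (hc : c ≠ 0) (hd : d ≠ 0) :
    (mono r c + mono s d).coeff.support.card = 2 := by
  classical
  rw [mono, mono, coeff_add, coeff_single, coeff_single, Finsupp.support_add_eq,
    Finsupp.support_single _ hc, Finsupp.support_single _ hd]
  · exact Finset.card_pair hrs
  · simpa [Finsupp.support_single _ hc, Finsupp.support_single _ hd] using hrs

lemma dvd_coeff_mono_mul (k : ℤ) (e : ℕ) (h : NL) (m : ℤ) : e ∣ (mono k e * h).coeff m :=
  ⟨_, coeff_single_mul_apply ..⟩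

lemma isUnit_of_binomial_eq_mul (hrs : r ≠ s) (hcd : c.Coprime d) {g h : NL}
    (hgh : mono r c + mono s d = g * h) (hg : g.coeff.support.card ≤ 1) : IsUnit g := by
  obtain ⟨k, e, hk⟩ := Finsupp.card_support_le_one'.mp hg
  obtain rfl : g = mono k e := coeff_injective hk
  have he : e ∣ c.gcd d := by
    refine Nat.dvd_gcd ?_ ?_
    · simpa only [← hgh, coeff_binomial_left hrs] using dvd_coeff_mono_mul k e h r
    · simpa only [← hgh, coeff_binomial_right hrs] using dvd_coeff_mono_mul k e h s
  rw [hcd, Nat.dvd_one] at he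
  exact he ▸ isUnit_mono_one k

theorem irreducible_binomial (hrs : r ≠ s) (hc : c ≠ 0) (hd : d ≠ 0) (hcd : c.Coprime d) :
    Irreducible (mono r c + mono s d) := by
  have hf : evalOne (mono r c + mono s d) = c + d := by
    rw [evalOne_add, evalOne_mono, evalOne_mono]
  refine ⟨fun hu => ?_, fun g h hgh => ?_⟩
  · rw [isUnit_iff_evalOne_eq_one, hf] at hu
    omega
  have hf0 : mono r c + mono s d ≠ 0 := by
    rw [ne_eq, ← evalOne_eq_zero_iff, hf]; omega
  have hcard := card_support_coeff_mul (left_ne_zero_of_mul (hgh ▸ hf0))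
    (right_ne_zero_of_mul (hgh ▸ hf0))
  rw [← hgh, card_support_coeff_binomial hrs hc hd] at hcard
  rcases le_or_gt g.coeff.support.card 1 with hg | hg
  · exact .inl (isUnit_of_binomial_eq_mul hrs hcd hgh hg)
  · exact .inr (isUnit_of_binomial_eq_mul hrs hcd (hgh.trans (mul_comm g h)) (by omega))

end Binomial

lemma irreducible_mono_of_prime (k : ℤ) {p : ℕ} (hp : p.Prime) : Irreducible (mono k p) :=
  irreducible_of_prime_evalOne ((evalOne_mono k p).symm ▸ hp)

lemma mono_add_mono (k : ℤ) (c d : ℕ) : mono k c + mono k d = mono k (c + d) :=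
  (single_add k c d).symm

lemma split_binomial_of_eq_one {a : ℕ} {r s : ℤ} (hrs : r ≠ s) (ha : 3 ≤ a) :
    Irreducible (mono r (a - 2) + mono s 1) ∧ Irreducible (mono r 2) ∧
      mono r a + mono s 1 = (mono r (a - 2) + mono s 1) + mono r 2 := by
  refine ⟨irreducible_binomial hrs (by omega) one_ne_zero (Nat.coprime_one_right _),
    irreducible_mono_of_prime r Nat.prime_two, ?_⟩
  rw [add_right_comm, mono_add_mono, Nat.sub_add_cancel (by omega : 2 ≤ a)]

lemma split_binomial_of_one_lt {a b : ℕ} {r s : ℤ} (hrs : r ≠ s) (ha : 2 ≤ a) (hb : 1 < b) :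
    Irreducible (mono r (a - 1) + mono s 1) ∧ Irreducible (mono r 1 + mono s (b - 1)) ∧
      mono r a + mono s b = (mono r (a - 1) + mono s 1) + (mono r 1 + mono s (b - 1)) := by
  refine ⟨irreducible_binomial hrs (by omega) one_ne_zero (Nat.coprime_one_right _),
    irreducible_binomial hrs one_ne_zero (by omega) (Nat.coprime_one_left _), ?_⟩
  rw [add_add_add_comm, mono_add_mono, mono_add_mono, Nat.sub_add_cancel (by omega : 1 ≤ a),
    Nat.add_sub_cancel' hb.le]

/-- Binomial case: `a x^r + b x^s` with `a ≥ b ≥ 1`, `r ≠ s`, `a + b > 3` is a sum of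
two irreducibles, with the explicit decompositions given in each case. -/
theorem stmt11 (a b : ℕ) (r s : ℤ) (hb : 1 ≤ b) (hba : b ≤ a) (hrs : r ≠ s)
    (hab : 3 < a + b) :
    (∃ g h : NL, Irreducible g ∧ Irreducible h ∧ mono r a + mono s b = g + h) ∧
    (b = 1 →
      Irreducible (mono r (a - 2) + mono s 1) ∧ Irreducible (mono r 2) ∧
      mono r a + mono s b = (mono r (a - 2) + mono s 1) + mono r 2) ∧
    (1 < b →
      Irreducible (mono r (a - 1) + mono s 1) ∧ Irreducible (mono r 1 + mono s (b - 1)) ∧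
      mono r a + mono s b = (mono r (a - 1) + mono s 1) + (mono r 1 + mono s (b - 1))) := by
  refine ⟨?_, fun hb1 => ?_, fun hb1 => split_binomial_of_one_lt hrs (by omega) hb1⟩
  · rcases hb.eq_or_lt with rfl | hb1
    · exact ⟨_, _, split_binomial_of_eq_one hrs (by omega)⟩
    · exact ⟨_, _, split_binomial_of_one_lt hrs (by omega) hb1⟩
  · subst hb1
    exact split_binomial_of_eq_one hrs (by omega)
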